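/- arXiv:2004.03341 — 9 statements merged into one kernel-verified Lean document; each statement's English description precedes it below -/
import Mathlib

section
/- Let R be an Artinian commutative ring and a ∈ R a zero-divisor that is not nilpotent. Then there exists an idempotent e ∈ R such that the canonical ring homomorphism R → R/(e) × R/(1−e) is an isomorphism, the image of a in R/(e) is nilpotent, and the image of a in R/(1−e) is a unit. -/
/-!
Artinianity makes the chain `(a) ⊇ (a²) ⊇ ⋯` stabilise, so `a ^ n = a ^ (n + 1) * y` for some
`n` and `y`. Then `u = a * y` fixes `a ^ n` under multiplication, and `e = u ^ (n + 1)` is an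
idempotent with `a ^ n ∈ (e)` and `a ∣ e`: modulo `e` the element `a` is nilpotent, and modulo
`1 - e`, where `e` becomes `1`, it is a unit.
-/

theorem mul_pow_eq_self_of_mul_eq_self {M : Type*} [Monoid M] {x u : M} (h : x * u = x) :
    ∀ k : ℕ, x * u ^ k = x
  | 0 => by rw [pow_zero, mul_one]
  | k + 1 => by rw [pow_succ, ← mul_assoc, mul_pow_eq_self_of_mul_eq_self h k, h]

theorem isIdempotentElem_mul_pow_succ {M : Type*} [CommMonoid M] {a y : M} {n : ℕ}
    (h : a ^ n * (a * y) = a ^ n) : IsIdempotentElem ((a * y) ^ (n + 1)) := by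
  have hfix := mul_pow_eq_self_of_mul_eq_self h (n + 1)
  calc (a * y) ^ (n + 1) * (a * y) ^ (n + 1)
      = a ^ n * (a * y) ^ (n + 1) * (a * y ^ (n + 1)) := by
        rw [mul_pow a y, pow_succ a n]; ac_rfl
    _ = (a * y) ^ (n + 1) := by
        rw [hfix, mul_pow a y, pow_succ a n]; ac_rfl

namespace Ideal.Quotient

variable {R : Type*} [CommRing R]

theorem isNilpotent_mk_of_pow_mem {I : Ideal R} {a : R} {n : ℕ} (h : a ^ n ∈ I) :
    IsNilpotent (mk I a) :=
  ⟨n, by rw [← map_pow, eq_zero_iff_mem]; exact h⟩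

theorem isUnit_mk_span_one_sub_of_dvd {a e : R} (h : a ∣ e) :
    IsUnit (mk (span {1 - e}) a) := by
  have he : mk (span {1 - e}) e = 1 := by
    rw [← map_one (mk _), mk_eq_mk_iff_sub_mem]
    exact mem_span_singleton'.mpr ⟨-1, by ring⟩
  exact isUnit_of_dvd_one (he ▸ map_dvd _ h)

end Ideal.Quotient

theorem IsArtinianRing.exists_pow_mul_mul_eq_pow {R : Type*} [CommRing R] [IsArtinianRing R]
    (a : R) : ∃ (n : ℕ) (y : R), a ^ n * (a * y) = a ^ n := by
  obtain ⟨n, y, hy⟩ := IsArtinian.exists_pow_succ_smul_dvd a (1 : R)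
  exact ⟨n, y, by simpa [pow_succ, mul_assoc] using hy⟩

theorem stmt1_general {R : Type*} [CommRing R] [IsArtinianRing R] (a : R) :
    ∃ e : R, IsIdempotentElem e ∧
      Function.Bijective
        ((Ideal.Quotient.mk (Ideal.span {e})).prod
          (Ideal.Quotient.mk (Ideal.span {1 - e}))) ∧
      IsNilpotent (Ideal.Quotient.mk (Ideal.span {e}) a) ∧
      IsUnit (Ideal.Quotient.mk (Ideal.span {1 - e}) a) := by
  obtain ⟨n, y, h⟩ := IsArtinianRing.exists_pow_mul_mul_eq_pow a
  have he := isIdempotentElem_mul_pow_succ h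
  refine ⟨(a * y) ^ (n + 1), he,
    RingHom.prod_bijective_of_isIdempotentElem he he.one_sub (add_sub_cancel _ _)
      he.mul_one_sub_self,
    Ideal.Quotient.isNilpotent_mk_of_pow_mem (n := n) ?_,
    Ideal.Quotient.isUnit_mk_span_one_sub_of_dvd ?_⟩
  · exact Ideal.mem_span_singleton'.mpr ⟨a ^ n, mul_pow_eq_self_of_mul_eq_self h _⟩
  · exact dvd_pow (dvd_mul_right a y) n.succ_ne_zero

/-- Splitting an Artinian ring at a non-nilpotent zero-divisor. -/
theorem stmt1 {R : Type*} [CommRing R] [IsArtinianRing R] (a : R)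
    (hzd : ∃ b : R, b ≠ 0 ∧ a * b = 0) (hnil : ¬ IsNilpotent a) :
    ∃ e : R, IsIdempotentElem e ∧
      Function.Bijective
        ((Ideal.Quotient.mk (Ideal.span {e})).prod
          (Ideal.Quotient.mk (Ideal.span {1 - e}))) ∧
      IsNilpotent (Ideal.Quotient.mk (Ideal.span {e}) a) ∧
      IsUnit (Ideal.Quotient.mk (Ideal.span {1 - e}) a) :=
  stmt1_general a
end

section
/- Let R be a commutative ring with finitely many maximal ideals. If f, g ∈ R[x] are primitive polynomials (their coefficients generate the unit ideal), then the product fg is primitive. -/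
/-!
If `fg` were not primitive, its coefficients would lie in some maximal ideal `m`. Reducing
modulo `m` then kills `fg` in the domain `(R ⧸ m)[X]`, so it kills `f` or `g`, i.e. all
coefficients of `f` or of `g` lie in `m`, contradicting their primitivity.
-/

open Polynomial

namespace Polynomial

variable {R : Type*} [CommRing R]

theorem span_range_coeff_le_iff_map_eq_zero {I : Ideal R} {p : R[X]} :
    Ideal.span (Set.range p.coeff) ≤ I ↔ p.map (Ideal.Quotient.mk I) = 0 := by
  simp only [Ideal.span_le, Set.range_subset_iff, Polynomial.ext_iff, coeff_map, coeff_zero,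
    Ideal.Quotient.eq_zero_iff_mem, SetLike.mem_coe]

theorem span_range_coeff_mul_le_iff {P : Ideal R} [P.IsPrime] {f g : R[X]} :
    Ideal.span (Set.range (f * g).coeff) ≤ P ↔
      Ideal.span (Set.range f.coeff) ≤ P ∨ Ideal.span (Set.range g.coeff) ≤ P := by
  simp only [span_range_coeff_le_iff_map_eq_zero, Polynomial.map_mul, mul_eq_zero]

end Polynomial

theorem stmt3_general {R : Type*} [CommRing R]
    (f g : R[X])
    (hf : Ideal.span (Set.range f.coeff) = ⊤)
    (hg : Ideal.span (Set.range g.coeff) = ⊤) :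
    Ideal.span (Set.range (f * g).coeff) = ⊤ := by
  by_contra hfg
  obtain ⟨m, hm, hle⟩ := Ideal.exists_le_maximal _ hfg
  rcases span_range_coeff_mul_le_iff.mp hle with hfm | hgm
  · exact hm.ne_top (top_le_iff.mp (hf ▸ hfm))
  · exact hm.ne_top (top_le_iff.mp (hg ▸ hgm))

/-- Over a commutative ring with finitely many maximal ideals, the product of two
primitive polynomials (coefficients generating the unit ideal) is primitive. -/
theorem stmt3 {R : Type*} [CommRing R]
    (hfin : {I : Ideal R | I.IsMaximal}.Finite) (f g : R[X])
    (hf : Ideal.span (Set.range f.coeff) = ⊤)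
    (hg : Ideal.span (Set.range g.coeff) = ⊤) :
    Ideal.span (Set.range (f * g).coeff) = ⊤ :=
  stmt3_general f g hf hg
end

section
/- Let R be a commutative ring, f ∈ R[x] a nonzero polynomial whose content ideal C(f) is nilpotent and principal, generated by c. If f̃ ∈ R[x] satisfies f = c · f̃, then the content of f̃ is not nilpotent. -/
/-!
Since `f = c • f̃`, every coefficient of `f` lies in `(c) * C(f̃)`, so `(c) ≤ (c) * C(f̃)` and by
iteration `(c) ≤ (c) * C(f̃) ^ n` for every `n`. If `C(f̃)` were nilpotent this would give `c = 0`,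
hence `f = 0`.
-/

open Polynomial

theorem Ideal.le_mul_pow_of_le_mul {R : Type*} [CommSemiring R] {I J : Ideal R}
    (h : I ≤ I * J) (n : ℕ) : I ≤ I * J ^ n := by
  induction n with
  | zero => simp
  | succ n ih =>
    calc I ≤ I * J ^ n := ih
      _ ≤ I * J * J ^ n := Ideal.mul_mono_left h
      _ = I * J ^ (n + 1) := by ring

theorem Ideal.eq_bot_of_le_mul_of_isNilpotent {R : Type*} [CommSemiring R] {I J : Ideal R}
    (h : I ≤ I * J) (hJ : IsNilpotent J) : I = ⊥ := by
  obtain ⟨k, hk⟩ := hJ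
  simpa [hk] using Ideal.le_mul_pow_of_le_mul h k

theorem Polynomial.span_range_coeff_eq_contentIdeal {R : Type*} [Semiring R] (p : R[X]) :
    Ideal.span (Set.range p.coeff) = p.contentIdeal := by
  refine le_antisymm (Ideal.span_le.mpr ?_) (Ideal.span_mono ?_)
  · rintro _ ⟨n, rfl⟩
    exact coeff_mem_contentIdeal p n
  · intro a ha
    obtain ⟨n, -, rfl⟩ := mem_coeffs_iff.mp ha
    exact ⟨n, rfl⟩

theorem Polynomial.contentIdeal_C_mul_le {R : Type*} [CommSemiring R] (c : R) (p : R[X]) :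
    (C c * p).contentIdeal ≤ Ideal.span {c} * p.contentIdeal := by
  simpa [contentIdeal_C] using contentIdeal_mul_le_mul_contentIdeal (C c) p

theorem stmt4_general {R : Type*} [CommRing R] (f ftilde : R[X]) (c : R)
    (hf0 : f ≠ 0)
    (hgen : Ideal.span (Set.range f.coeff) = Ideal.span {c})
    (heq : f = C c * ftilde) :
    ¬ IsNilpotent (Ideal.span (Set.range ftilde.coeff)) := by
  rw [span_range_coeff_eq_contentIdeal]
  intro hnil
  rw [span_range_coeff_eq_contentIdeal, heq] at hgen
  have hc : Ideal.span {c} ≤ Ideal.span {c} * ftilde.contentIdeal :=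
    hgen ▸ contentIdeal_C_mul_le c ftilde
  have hc0 : c = 0 := Ideal.span_singleton_eq_bot.mp (Ideal.eq_bot_of_le_mul_of_isNilpotent hc hnil)
  exact hf0 (by rw [heq, hc0, map_zero, zero_mul])

/-- If `f ≠ 0` has nilpotent content ideal generated by `c` and `f = C c * f̃`,
then the content ideal of `f̃` is not nilpotent. -/
theorem stmt4 {R : Type*} [CommRing R] (f ftilde : R[X]) (c : R)
    (hf0 : f ≠ 0)
    (hgen : Ideal.span (Set.range f.coeff) = Ideal.span {c})
    (hnil : IsNilpotent (Ideal.span (Set.range f.coeff)))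
    (heq : f = C c * ftilde) :
    ¬ IsNilpotent (Ideal.span (Set.range ftilde.coeff)) :=
  stmt4_general f ftilde c hf0 hgen heq
end

section
/- Let R be a commutative ring whose nilradical N satisfies N^E = 0. If f ∈ R[x] is a unit in R[x], then its inverse f⁻¹ has degree at most deg(f)·E. -/
open Polynomial

/-!
A unit `f` of `R[X]` is `C a + h` with `a` a unit of `R` and all coefficients of `h`
nilpotent, so `h` lies in the extension of the nilradical and `h ^ E = 0`. Writing
`x = -(a⁻¹ h)`, the inverse of `f` is the truncated geometric series
`a⁻¹ (1 + x + ⋯ + x ^ (E - 1))`, whose degree is at most `deg f * E`.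
-/

theorem pow_eq_zero_of_mem_of_pow_eq_bot {S : Type*} [CommSemiring S] {I : Ideal S} {n : ℕ}
    (hI : I ^ n = ⊥) {x : S} (hx : x ∈ I) : x ^ n = 0 := by
  simpa [hI] using Ideal.pow_mem_pow hx n

theorem mul_mul_geom_sum_eq_one_of_pow_eq_zero {S : Type*} [CommRing S] {a v h : S} {n : ℕ}
    (hav : a * v = 1) (hh : h ^ n = 0) :
    (a + h) * (v * ∑ i ∈ Finset.range n, (-(v * h)) ^ i) = 1 := by
  have hx : (-(v * h)) ^ n = 0 := by rw [neg_pow, mul_pow, hh, mul_zero, mul_zero]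
  calc (a + h) * (v * ∑ i ∈ Finset.range n, (-(v * h)) ^ i)
      = (1 - -(v * h)) * ∑ i ∈ Finset.range n, (-(v * h)) ^ i := by
        rw [← mul_assoc, add_mul, hav]; ring
    _ = 1 := by rw [mul_neg_geom_sum, hx, sub_zero]

namespace Polynomial

variable {R : Type*} [CommRing R]

theorem natDegree_geom_sum_le (p : R[X]) (n : ℕ) :
    (∑ i ∈ Finset.range n, p ^ i).natDegree ≤ p.natDegree * n :=
  natDegree_sum_le_of_forall_le _ _ fun i hi =>
    natDegree_pow_le.trans <| by
      rw [mul_comm]; exact Nat.mul_le_mul_left _ (Finset.mem_range.mp hi).le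

theorem sub_C_coeff_zero_mem_map_nilradical {f : R[X]} (hf : IsUnit f) :
    f - C (f.coeff 0) ∈ Ideal.map C (nilradical R) := by
  rw [Ideal.mem_map_C_iff]
  intro n
  rcases eq_or_ne n 0 with rfl | hn
  · simp
  · simpa [coeff_C, hn, mem_nilradical] using (isUnit_iff_coeff_isUnit_isNilpotent.mp hf).2 n hn

theorem sub_C_coeff_zero_pow_eq_zero {E : ℕ} (hE : nilradical R ^ E = ⊥) {f : R[X]}
    (hf : IsUnit f) : (f - C (f.coeff 0)) ^ E = 0 :=
  pow_eq_zero_of_mem_of_pow_eq_bot (by rw [← Ideal.map_pow, hE, Ideal.map_bot])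
    (sub_C_coeff_zero_mem_map_nilradical hf)

end Polynomial

theorem stmt7_general {R : Type*} [CommRing R] (E : ℕ)
    (hE : nilradical R ^ E = ⊥) (f g : R[X]) (hfg : f * g = 1) :
    g.natDegree ≤ f.natDegree * E := by
  have hf : IsUnit f := .of_mul_eq_one g hfg
  obtain ⟨v, hv⟩ := (isUnit_iff_coeff_isUnit_isNilpotent.mp hf).1.exists_right_inv
  set h := f - C (f.coeff 0)
  have hfG : f * (C v * ∑ i ∈ Finset.range E, (-(C v * h)) ^ i) = 1 := by
    have := mul_mul_geom_sum_eq_one_of_pow_eq_zero (by rw [← C_mul, hv, C_1])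
      (sub_C_coeff_zero_pow_eq_zero hE hf)
    rwa [add_sub_cancel] at this
  have hg : g = C v * ∑ i ∈ Finset.range E, (-(C v * h)) ^ i :=
    left_inv_eq_right_inv (by rw [mul_comm, hfg]) hfG
  calc g.natDegree ≤ (∑ i ∈ Finset.range E, (-(C v * h)) ^ i).natDegree :=
        hg ▸ natDegree_C_mul_le _ _
    _ ≤ (-(C v * h)).natDegree * E := natDegree_geom_sum_le _ _
    _ ≤ f.natDegree * E := by
        gcongr
        rw [natDegree_neg]
        exact (natDegree_C_mul_le _ _).trans natDegree_sub_C.le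

/-- If the nilradical of `R` satisfies `N^E = 0` and `f` is a unit of `R[x]`,
then the degree of the inverse of `f` is at most `deg f * E`. -/
theorem stmt7 {R : Type*} [CommRing R] (E : ℕ) (hE1 : 1 ≤ E)
    (hE : nilradical R ^ E = ⊥) (f g : R[X]) (hfg : f * g = 1) :
    g.natDegree ≤ f.natDegree * E :=
  stmt7_general E hE f g hfg
end

section
/- Let R be a commutative ring and f = ∑_{i=0}^{d} f_i x^i ∈ R[x] with f_d ≠ 0. Suppose there is 0 ≤ k ≤ d such that f_i is nilpotent for all k+1 ≤ i ≤ d and f_k is a unit. Then there exist a unit u ∈ R[x]^× of degree d − k and a polynomial f̃ ∈ R[x] of degree k with unit leading coefficient such that f = u · f̃. -/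
/-!
Let `I` be the ideal generated by the nilpotent coefficients `f_{k+1}, …, f_d`; it is finitely
generated by nilpotents, hence nilpotent. Modulo `I`, `f` is `f_k` times the monic polynomial
`g₀ = f_k⁻¹ (f_0 + ⋯ + f_k x^k)`. A Newton-type iteration lifts `f ≡ q g (mod I^(n+1))`, with `g`
monic of degree `k` and `q ≡ 1 (mod I)`, to the same congruence modulo `I^(n+2)`, so after finitely
many steps `f = q g` exactly, and `q` is a unit because `q - 1` is nilpotent.
-/

open Polynomial

namespace Polynomial

variable {R : Type*} [CommRing R] {I : Ideal R}

theorem mem_map_C_iff_map_eq_zero {p : R[X]} :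
    p ∈ I.map C ↔ p.map (Ideal.Quotient.mk I) = 0 := by
  rw [← coe_mapRingHom, ← RingHom.mem_ker, ker_mapRingHom, Ideal.mk_ker]

theorem modByMonic_mem_map_C {p q : R[X]} (hq : q.Monic) (hp : p ∈ I.map C) :
    p %ₘ q ∈ I.map C := by
  rw [mem_map_C_iff_map_eq_zero] at hp ⊢
  rw [map_modByMonic _ hq, hp, zero_modByMonic]

theorem divByMonic_mem_map_C {p q : R[X]} (hq : q.Monic) (hp : p ∈ I.map C) :
    p /ₘ q ∈ I.map C := by
  rw [mem_map_C_iff_map_eq_zero] at hp ⊢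
  rw [map_divByMonic _ hq, hp, zero_divByMonic]

theorem exists_monic_sub_mul_mem_pow_succ_succ [Nontrivial R] {f q g : R[X]} {n : ℕ}
    (hg : g.Monic) (hq : q - 1 ∈ I.map C) (hf : f - q * g ∈ I.map C ^ (n + 1)) :
    ∃ q' g' : R[X], g'.Monic ∧ g'.natDegree = g.natDegree ∧ q' - 1 ∈ I.map C ∧
      f - q' * g' ∈ I.map C ^ (n + 2) := by
  set s := f - q * g
  rw [← Ideal.map_pow] at hf
  have hr : s %ₘ g ∈ I.map C ^ (n + 1) := by
    rw [← Ideal.map_pow]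
    exact modByMonic_mem_map_C hg hf
  have hs : s /ₘ g ∈ I.map C :=
    Ideal.map_mono (Ideal.pow_le_self n.succ_ne_zero) (divByMonic_mem_map_C hg hf)
  have hdeg := degree_modByMonic_lt s hg
  have hq' : q + s /ₘ g - 1 ∈ I.map C := by
    rw [add_sub_right_comm]
    exact add_mem hq hs
  refine ⟨q + s /ₘ g, g + s %ₘ g, hg.add_of_left hdeg,
    natDegree_add_eq_left_of_degree_lt hdeg, hq', ?_⟩
  -- moving `r = s %ₘ g` into `g` leaves the error `(1 - q') r`, one power of `I` smaller
  have herr : f - (q + s /ₘ g) * (g + s %ₘ g) = -((q + s /ₘ g - 1) * (s %ₘ g)) := by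
    linear_combination (modByMonic_add_div s g).symm
  rw [herr, pow_succ']
  exact neg_mem (Ideal.mul_mem_mul hq' hr)

theorem exists_isUnit_mul_monic_of_sub_mem_map_C [Nontrivial R] (hI : IsNilpotent I)
    {f g₀ : R[X]} (hg₀ : g₀.Monic) (hf : f - g₀ ∈ I.map C) :
    ∃ u g : R[X], IsUnit u ∧ g.Monic ∧ g.natDegree = g₀.natDegree ∧ f = u * g := by
  have approx (n : ℕ) : ∃ q g : R[X], g.Monic ∧ g.natDegree = g₀.natDegree ∧
      q - 1 ∈ I.map C ∧ f - q * g ∈ I.map C ^ (n + 1) := by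
    induction n with
    | zero => exact ⟨1, g₀, hg₀, rfl, by simp, by simpa using hf⟩
    | succ n ih =>
      obtain ⟨q, g, hg, hgdeg, hq, hfqg⟩ := ih
      obtain ⟨q', g', hg', hg'deg, hq', hfqg'⟩ := exists_monic_sub_mul_mem_pow_succ_succ hg hq hfqg
      exact ⟨q', g', hg', hg'deg.trans hgdeg, hq', hfqg'⟩
  obtain ⟨m, hm⟩ := hI
  have hJm : I.map C ^ m = ⊥ := by rw [← Ideal.map_pow, hm, Ideal.zero_eq_bot, Ideal.map_bot]
  obtain ⟨q, g, hg, hgdeg, hq, hfqg⟩ := approx m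
  have hnil : IsNilpotent (q - 1) := ⟨m, by simpa [hJm] using Ideal.pow_mem_pow hq m⟩
  have hfqg0 : f - q * g ∈ (⊥ : Ideal R[X]) := hJm ▸ Ideal.pow_le_pow_right m.le_succ hfqg
  refine ⟨q, g, sub_add_cancel q 1 ▸ hnil.isUnit_add_one, hg, hgdeg, ?_⟩
  rwa [Ideal.mem_bot, sub_eq_zero] at hfqg0

theorem exists_isUnit_mul_monic_of_sub_isUnit_mul_mem_map_C [Nontrivial R] (hI : IsNilpotent I)
    {f u₀ g₀ : R[X]} (hu₀ : IsUnit u₀) (hg₀ : g₀.Monic) (hf : f - u₀ * g₀ ∈ I.map C) :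
    ∃ u g : R[X], IsUnit u ∧ g.Monic ∧ g.natDegree = g₀.natDegree ∧ f = u * g := by
  obtain ⟨u₀, rfl⟩ := hu₀
  obtain ⟨u, g, hu, hg, hgdeg, hfug⟩ := exists_isUnit_mul_monic_of_sub_mem_map_C
    (f := ↑u₀⁻¹ * f) hI hg₀ (by simpa [mul_sub] using Ideal.mul_mem_left _ (↑u₀⁻¹ : R[X]) hf)
  exact ⟨u₀ * u, g, u₀.isUnit.mul hu, hg, hgdeg,
    by rw [mul_assoc, ← hfug, Units.mul_inv_cancel_left]⟩

theorem exists_monic_natDegree_eq_sub_C_mul_mem_map_C [Nontrivial R] {f : R[X]} {k : ℕ}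
    (hk : IsUnit (f.coeff k)) (hI : ∀ i, k < i → f.coeff i ∈ I) :
    ∃ g₀ : R[X], g₀.Monic ∧ g₀.natDegree = k ∧ f - C (f.coeff k) * g₀ ∈ I.map C := by
  obtain ⟨c, hc⟩ := hk
  set T := PowerSeries.trunc (k + 1) (f : PowerSeries R)
  have hT (i : ℕ) : T.coeff i = if i ≤ k then f.coeff i else 0 := by
    simp [T, PowerSeries.coeff_trunc]
  have hlead : (C (↑c⁻¹ : R) * T).coeff k = 1 := by
    rw [coeff_C_mul, hT, if_pos le_rfl, ← hc, Units.inv_mul]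
  have hdeg : (C (↑c⁻¹ : R) * T).natDegree ≤ k :=
    (natDegree_C_mul_le _ _).trans (Nat.lt_succ_iff.mp (PowerSeries.natDegree_trunc_lt _ k))
  refine ⟨C (↑c⁻¹ : R) * T, monic_of_natDegree_le_of_coeff_eq_one k hdeg hlead,
    natDegree_eq_of_le_of_coeff_ne_zero hdeg (hlead ▸ one_ne_zero), ?_⟩
  rw [← hc, ← mul_assoc, ← C_mul, Units.mul_inv, C_1, one_mul]
  refine Ideal.mem_map_C_iff.mpr fun i => ?_
  rw [coeff_sub, hT]
  split_ifs with hik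
  · simp
  · simpa using hI i (not_le.mp hik)

end Polynomial

theorem Ideal.isNilpotent_span_of_finite {R : Type*} [CommRing R] {s : Set R} (hs : s.Finite)
    (h : ∀ x ∈ s, IsNilpotent x) : IsNilpotent (Ideal.span s) :=
  (Ideal.FG.isNilpotent_iff_le_nilradical (Submodule.fg_span hs)).mpr (Ideal.span_le.mpr h)

theorem stmt9_general {R : Type*} [CommRing R] (f : R[X]) (d k : ℕ)
    (hd : f.natDegree = d) (hfd : f.coeff d ≠ 0)
    (hnil : ∀ i, k + 1 ≤ i → i ≤ d → IsNilpotent (f.coeff i))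
    (hu : IsUnit (f.coeff k)) :
    ∃ u ftilde : R[X], IsUnit u ∧ u.natDegree = d - k ∧
      ftilde.natDegree = k ∧ IsUnit ftilde.leadingCoeff ∧ f = u * ftilde := by
  have : Nontrivial R := nontrivial_of_ne _ _ hfd
  set I := Ideal.span (f.coeff '' Set.Ioc k d)
  have hI : IsNilpotent I := Ideal.isNilpotent_span_of_finite ((Set.finite_Ioc k d).image _)
    (by rintro _ ⟨i, ⟨hki, hid⟩, rfl⟩; exact hnil i hki hid)
  have hcoeff (i : ℕ) (hki : k < i) : f.coeff i ∈ I := by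
    rcases le_or_gt i d with hid | hdi
    · exact Ideal.subset_span (Set.mem_image_of_mem f.coeff (Set.mem_Ioc.mpr ⟨hki, hid⟩))
    · simp [coeff_eq_zero_of_natDegree_lt (hd ▸ hdi)]
  obtain ⟨g₀, hg₀, hg₀deg, hfg₀⟩ := exists_monic_natDegree_eq_sub_C_mul_mem_map_C hu hcoeff
  obtain ⟨u, g, hu', hg, hgdeg, hfug⟩ :=
    exists_isUnit_mul_monic_of_sub_isUnit_mul_mem_map_C hI (isUnit_C.mpr hu) hg₀ hfg₀
  have hdeg : d = g.natDegree + u.natDegree := by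
    rw [← hd, hfug, ← hg.natDegree_mul_comm, hg.natDegree_mul' hu'.ne_zero]
  exact ⟨u, g, hu', by omega, hgdeg.trans hg₀deg, by rw [hg.leadingCoeff]; exact isUnit_one, hfug⟩

/-- If all coefficients of `f` above index `k` are nilpotent and the `k`-th
coefficient is a unit, then `f = u * f̃` with `u` a unit of `R[x]` of degree
`d - k` and `f̃` of degree `k` with unit leading coefficient. -/
theorem stmt9 {R : Type*} [CommRing R] (f : R[X]) (d k : ℕ)
    (hd : f.natDegree = d) (hfd : f.coeff d ≠ 0) (hk : k ≤ d)
    (hnil : ∀ i, k + 1 ≤ i → i ≤ d → IsNilpotent (f.coeff i))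
    (hu : IsUnit (f.coeff k)) :
    ∃ u ftilde : R[X], IsUnit u ∧ u.natDegree = d - k ∧
      ftilde.natDegree = k ∧ IsUnit ftilde.leadingCoeff ∧ f = u * ftilde :=
  stmt9_general f d k hd hfd hnil hu
end

section
/- Let R be a commutative ring, f, g ∈ R[x] with g of positive degree and unit leading coefficient. Let c be a generator of the content ideal of f and h ∈ R[x] with f = c·h. Then the reduced resultant ideal satisfies (f, g) ∩ R = c · ((h̄, ḡ) ∩ (R/Ann(c))) lifted to R, i.e., rres_R(f, g) = c · rres_{R/Ann(c)}(h, g). -/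
/-!
After normalizing `g` to be monic: if `r ∈ (f, g) ∩ R`, reducing modulo `c` kills `f`, and a
monic `g` of positive degree divides no nonzero constant, so `r = c s`. Then
`c (s - a h) = b g`, so `c` times the remainder of `s - a h` modulo `g` is a multiple of `g` of
smaller degree, hence zero; that is, the remainder vanishes over `R/Ann(c)`, which puts `s` in
`(h̄, ḡ)`. Conversely, a relation `s̄ = ā h̄ + b̄ ḡ` over `R/Ann(c)` becomes exact in `R[X]` once
multiplied by `c`.
-/

open Polynomial

namespace Polynomial

variable {R : Type*} [CommRing R]

theorem map_mk_annihilator_eq_zero_iff {c : R} {p : R[X]} :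
    p.map (Ideal.Quotient.mk (Ideal.span {c}).annihilator) = 0 ↔ C c * p = 0 := by
  simp only [Polynomial.ext_iff, coeff_map, coeff_C_mul, coeff_zero,
    Ideal.Quotient.eq_zero_iff_mem, Ideal.span, Submodule.mem_annihilator_span_singleton,
    smul_eq_mul, mul_comm _ c]

theorem span_pair_map_units_smul {S : Type*} [CommRing S] (φ : R →+* S) (u : Rˣ) (p q : R[X]) :
    Ideal.span {p.map φ, (u • q).map φ} = Ideal.span {p.map φ, q.map φ} := by
  rw [Units.smul_def, smul_eq_C_mul, Polynomial.map_mul, map_C, Ideal.span_insert,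
    Ideal.span_insert, Ideal.span_singleton_mul_left_unit ((u.isUnit.map φ).map C)]

theorem Monic.eq_zero_of_dvd_C {g : R[X]} (hg : g.Monic) (hdeg : 0 < g.degree) {r : R}
    (h : g ∣ C r) : r = 0 := by
  by_contra hr
  exact hg.not_dvd_of_degree_lt (C_ne_zero.2 hr) (degree_C_le.trans_lt hdeg) h

theorem Monic.map_eq_zero_of_C_mem_span_pair {S : Type*} [CommRing S] (φ : R →+* S)
    {f g : R[X]} (hg : g.Monic) (hdeg : 0 < g.degree) (hf : f.map φ = 0) {r : R}
    (hr : C r ∈ Ideal.span {f, g}) : φ r = 0 := by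
  nontriviality S
  obtain ⟨a, b, hab⟩ := Ideal.mem_span_pair.1 hr
  refine (hg.map φ).eq_zero_of_dvd_C (by rwa [hg.degree_map]) ⟨b.map φ, ?_⟩
  rw [← map_C, ← hab, Polynomial.map_add, Polynomial.map_mul, Polynomial.map_mul, hf]
  ring

theorem Monic.map_dvd_map_mk_annihilator {g w : R[X]} (hg : g.Monic) {c : R}
    (h : g ∣ C c * w) :
    g.map (Ideal.Quotient.mk (Ideal.span {c}).annihilator) ∣
      w.map (Ideal.Quotient.mk (Ideal.span {c}).annihilator) := by
  nontriviality R
  have hrem : C c * (w %ₘ g) = 0 := by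
    by_contra hne
    refine hg.not_dvd_of_degree_lt hne ?_ ?_
    · rw [← smul_eq_C_mul]
      exact (degree_smul_le c _).trans_lt (degree_modByMonic_lt w hg)
    · have := dvd_add h (dvd_mul_of_dvd_right (dvd_modByMonic_sub w g) (C c))
      rwa [← mul_add, add_sub_cancel] at this
  refine ⟨(w /ₘ g).map (Ideal.Quotient.mk _), ?_⟩
  conv_lhs => rw [← modByMonic_add_div w g]
  rw [Polynomial.map_add, Polynomial.map_mul, map_mk_annihilator_eq_zero_iff.2 hrem, zero_add]

theorem comap_C_span_pair_le_of_monic {g h : R[X]} (hg : g.Monic) (hdeg : 0 < g.degree) (c : R) :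
    Ideal.comap (C : R →+* R[X]) (Ideal.span {C c * h, g}) ≤
      Ideal.span {c} *
        Ideal.comap (Ideal.Quotient.mk (Ideal.span {c}).annihilator)
          (Ideal.comap C
            (Ideal.span
              {h.map (Ideal.Quotient.mk (Ideal.span {c}).annihilator),
               g.map (Ideal.Quotient.mk (Ideal.span {c}).annihilator)})) := by
  intro r hr
  have hrc : r ∈ Ideal.span {c} := by
    rw [← Ideal.Quotient.eq_zero_iff_mem]
    refine hg.map_eq_zero_of_C_mem_span_pair _ hdeg ?_ hr
    rw [Polynomial.map_mul, map_C, Ideal.Quotient.mk_singleton_self, C_0, zero_mul]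
  obtain ⟨s, rfl⟩ := Ideal.mem_span_singleton.1 hrc
  obtain ⟨a, b, hab⟩ := Ideal.mem_span_pair.1 (Ideal.mem_comap.1 hr)
  have hdvd : g ∣ C c * (C s - a * h) := ⟨b, by rw [C_mul] at hab; linear_combination -hab⟩
  obtain ⟨k, hk⟩ := hg.map_dvd_map_mk_annihilator hdvd
  rw [Polynomial.map_sub, Polynomial.map_mul, map_C] at hk
  refine Ideal.mem_span_singleton_mul.2 ⟨s, ?_, rfl⟩
  rw [Ideal.mem_comap, Ideal.mem_comap, Ideal.mem_span_pair]
  exact ⟨a.map _, k, by linear_combination -hk⟩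

theorem le_comap_C_span_pair (g h : R[X]) (c : R) :
    Ideal.span {c} *
        Ideal.comap (Ideal.Quotient.mk (Ideal.span {c}).annihilator)
          (Ideal.comap C
            (Ideal.span
              {h.map (Ideal.Quotient.mk (Ideal.span {c}).annihilator),
               g.map (Ideal.Quotient.mk (Ideal.span {c}).annihilator)})) ≤
      Ideal.comap (C : R →+* R[X]) (Ideal.span {C c * h, g}) := by
  intro r hr
  obtain ⟨s, hs, rfl⟩ := Ideal.mem_span_singleton_mul.1 hr
  obtain ⟨a', b', hab'⟩ := Ideal.mem_span_pair.1 (Ideal.mem_comap.1 (Ideal.mem_comap.1 hs))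
  obtain ⟨a, rfl⟩ := map_surjective _ Ideal.Quotient.mk_surjective a'
  obtain ⟨b, rfl⟩ := map_surjective _ Ideal.Quotient.mk_surjective b'
  have hann : C c * (a * h + b * g - C s) = 0 := by
    rw [← map_mk_annihilator_eq_zero_iff, Polynomial.map_sub, Polynomial.map_add,
      Polynomial.map_mul, Polynomial.map_mul, map_C, hab', sub_self]
  rw [Ideal.mem_comap, Ideal.mem_span_pair]
  exact ⟨a, C c * b, by rw [C_mul]; linear_combination hann⟩

end Polynomial

theorem stmt13_general {R : Type*} [CommRing R] (f g h : R[X]) (c : R)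
    (hg : 0 < g.degree) (hglc : IsUnit g.leadingCoeff)
    (hfh : f = C c * h) :
    Ideal.comap (C : R →+* R[X]) (Ideal.span {f, g}) =
      Ideal.span {c} *
        Ideal.comap (Ideal.Quotient.mk (Ideal.span {c}).annihilator)
          (Ideal.comap
            (C : R ⧸ (Ideal.span {c}).annihilator →+*
              (R ⧸ (Ideal.span {c}).annihilator)[X])
            (Ideal.span
              {h.map (Ideal.Quotient.mk (Ideal.span {c}).annihilator),
               g.map (Ideal.Quotient.mk (Ideal.span {c}).annihilator)})) := by
  subst hfh
  set u := hglc.unit⁻¹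
  have hmonic : (u • g).Monic := monic_of_isUnit_leadingCoeff_inv_smul hglc
  have hdeg : 0 < (u • g).degree := by
    rwa [degree_smul_of_smul_regular _ (isSMulRegular_of_group u)]
  have hspan : Ideal.span {C c * h, g} = Ideal.span {C c * h, u • g} := by
    simpa using (span_pair_map_units_smul (RingHom.id R) u (C c * h) g).symm
  rw [hspan, ← span_pair_map_units_smul _ u]
  exact le_antisymm (comap_C_span_pair_le_of_monic hmonic hdeg c) (le_comap_C_span_pair _ h c)

/-- If `g` has positive degree and unit leading coefficient, `c` generates the
content ideal of `f` and `f = C c * h`, then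
`rres_R(f, g) = c · rres_{R/Ann(c)}(h, g)`. -/
theorem stmt13 {R : Type*} [CommRing R] (f g h : R[X]) (c : R)
    (hg : 0 < g.degree) (hglc : IsUnit g.leadingCoeff)
    (hc : Ideal.span (Set.range f.coeff) = Ideal.span {c})
    (hfh : f = C c * h) :
    Ideal.comap (C : R →+* R[X]) (Ideal.span {f, g}) =
      Ideal.span {c} *
        Ideal.comap (Ideal.Quotient.mk (Ideal.span {c}).annihilator)
          (Ideal.comap
            (C : R ⧸ (Ideal.span {c}).annihilator →+*
              (R ⧸ (Ideal.span {c}).annihilator)[X])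
            (Ideal.span
              {h.map (Ideal.Quotient.mk (Ideal.span {c}).annihilator),
               g.map (Ideal.Quotient.mk (Ideal.span {c}).annihilator)})) :=
  stmt13_general f g h c hg hglc hfh
end

section
/- Let R be a commutative ring, e ∈ R a nontrivial idempotent, and f, g ∈ R[x]. Let π₁: R[x] → (R/(e))[x] and π₂: R[x] → (R/(1−e))[x] be the coefficientwise projections. Then π_i((f,g) ∩ R) = (π_i(f), π_i(g)) ∩ R/(e_i) for i = 1, 2, i.e., the reduced resultant ideal commutes with the projections. -/
/-!
Write `π : R → R/(e)`. Since `π` and the induced map `R[X] → (R/(e))[X]` are surjective with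
kernels `(e)` and `(e)R[X]`, both sides pulled back to `R` become `((f, g) ∩ R) + (e)` and
`((f, g) + (e)R[X]) ∩ R`. These agree because `e` is idempotent: if `a = p + e s` with
`p ∈ (f, g)`, then `(1 - e) a = (1 - e) p ∈ (f, g)`, so `a = e a + (1 - e) a`.
-/

open Polynomial

namespace Ideal

theorem comap_span_singleton_sup_of_isIdempotentElem {R S : Type*} [CommRing R] [CommRing S]
    (φ : R →+* S) (J : Ideal S) {e : R} (he : IsIdempotentElem e) :
    comap φ (span {φ e} ⊔ J) = span {e} ⊔ comap φ J := by
  refine le_antisymm (fun a ha => ?_) (sup_le ?_ (comap_mono le_sup_right))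
  · obtain ⟨s, p, hp, hsp⟩ := mem_span_singleton_sup.mp (mem_comap.mp ha)
    have hcompl : (1 - e) * a ∈ comap φ J := by
      have : φ ((1 - e) * a) = φ (1 - e) * p := by
        rw [map_mul, ← hsp, mul_add, mul_left_comm, ← map_mul, he.one_sub_mul_self,
          map_zero, mul_zero, zero_add]
      rw [mem_comap, this]
      exact J.mul_mem_left _ hp
    have hsplit : a = e * a + (1 - e) * a := by ring
    rw [hsplit]
    exact add_mem (mem_sup_left (mul_mem_right _ _ (mem_span_singleton_self e)))
      (mem_sup_right hcompl)
  · rw [span_le, Set.singleton_subset_iff, SetLike.mem_coe, mem_comap]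
    exact mem_sup_left (mem_span_singleton_self _)

theorem map_quotient_comap_C_of_isIdempotentElem {R : Type*} [CommRing R] {e : R}
    (he : IsIdempotentElem e) (J : Ideal R[X]) :
    map (Quotient.mk (span {e})) (comap C J) =
      comap C (map (mapRingHom (Quotient.mk (span {e}))) J) := by
  set π := Quotient.mk (span {e})
  apply comap_injective_of_surjective π Quotient.mk_surjective
  rw [comap_map_of_surjective' π Quotient.mk_surjective, mk_ker, comap_comap, ← mapRingHom_comp_C,
    ← comap_comap, comap_map_of_surjective' _ (map_surjective π Quotient.mk_surjective),
    ker_mapRingHom, mk_ker, map_span, Set.image_singleton, sup_comm J,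
    comap_span_singleton_sup_of_isIdempotentElem C J he, sup_comm]

end Ideal

theorem stmt15_general {R : Type*} [CommRing R] (e : R) (he : IsIdempotentElem e)
    (f g : R[X]) :
    Ideal.map (Ideal.Quotient.mk (Ideal.span {e}))
        (Ideal.comap (C : R →+* R[X]) (Ideal.span {f, g})) =
      Ideal.comap (C : R ⧸ Ideal.span {e} →+* (R ⧸ Ideal.span {e})[X])
        (Ideal.span {f.map (Ideal.Quotient.mk (Ideal.span {e})),
                     g.map (Ideal.Quotient.mk (Ideal.span {e}))}) ∧
    Ideal.map (Ideal.Quotient.mk (Ideal.span {1 - e}))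
        (Ideal.comap (C : R →+* R[X]) (Ideal.span {f, g})) =
      Ideal.comap (C : R ⧸ Ideal.span {1 - e} →+* (R ⧸ Ideal.span {1 - e})[X])
        (Ideal.span {f.map (Ideal.Quotient.mk (Ideal.span {1 - e})),
                     g.map (Ideal.Quotient.mk (Ideal.span {1 - e}))}) := by
  have key : ∀ {e : R}, IsIdempotentElem e →
      Ideal.map (Ideal.Quotient.mk (Ideal.span {e})) (Ideal.comap C (Ideal.span {f, g})) =
        Ideal.comap C (Ideal.span {f.map (Ideal.Quotient.mk (Ideal.span {e})),
          g.map (Ideal.Quotient.mk (Ideal.span {e}))}) := fun he => by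
    rw [Ideal.map_quotient_comap_C_of_isIdempotentElem he, Ideal.map_span, Set.image_pair]
    rfl
  exact ⟨key he, key he.one_sub⟩

/-- The reduced resultant ideal commutes with the projections associated to a
nontrivial idempotent `e`. -/
theorem stmt15 {R : Type*} [CommRing R] (e : R) (he : IsIdempotentElem e)
    (h0 : e ≠ 0) (h1 : e ≠ 1) (f g : R[X]) :
    Ideal.map (Ideal.Quotient.mk (Ideal.span {e}))
        (Ideal.comap (C : R →+* R[X]) (Ideal.span {f, g})) =
      Ideal.comap (C : R ⧸ Ideal.span {e} →+* (R ⧸ Ideal.span {e})[X])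
        (Ideal.span {f.map (Ideal.Quotient.mk (Ideal.span {e})),
                     g.map (Ideal.Quotient.mk (Ideal.span {e}))}) ∧
    Ideal.map (Ideal.Quotient.mk (Ideal.span {1 - e}))
        (Ideal.comap (C : R →+* R[X]) (Ideal.span {f, g})) =
      Ideal.comap (C : R ⧸ Ideal.span {1 - e} →+* (R ⧸ Ideal.span {1 - e})[X])
        (Ideal.span {f.map (Ideal.Quotient.mk (Ideal.span {1 - e})),
                     g.map (Ideal.Quotient.mk (Ideal.span {1 - e}))}) :=
  stmt15_general e he f g
end

section
/- Let R be a commutative ring and f, g, h ∈ R[x] non-constant polynomials with deg(fg) = deg(f) + deg(g). Then res(fg, h) = res(f, h) · res(g, h). -/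
open Polynomial

/-- The Sylvester matrix of `f` (degree `m = f.natDegree`) and `g`
(degree `n = g.natDegree`). -/
noncomputable def sylvester {R : Type*} [CommRing R] (f g : R[X]) :
    Matrix (Fin (g.natDegree + f.natDegree)) (Fin (g.natDegree + f.natDegree)) R :=
  fun i j =>
    if (i : ℕ) < g.natDegree then
      (if (i : ℕ) ≤ (j : ℕ) then f.coeff ((j : ℕ) - (i : ℕ)) else 0)
    else
      (if (i : ℕ) - g.natDegree ≤ (j : ℕ) then
        g.coeff ((j : ℕ) - ((i : ℕ) - g.natDegree)) else 0)

/-- The resultant of two polynomials: the determinant of their Sylvester matrix. -/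
noncomputable def resultant {R : Type*} [CommRing R] (f g : R[X]) : R :=
  (_root_.sylvester f g).det

/-!
Up to transposition and the order of the two blocks, the Sylvester matrix above is Mathlib's
`Polynomial.sylvester g f`; the band conditions differ only where the coefficients vanish anyway.
So the resultant here is `Polynomial.resultant h (f * g)` up to the swap, and multiplicativity is
`Polynomial.resultant_mul_right` once `deg (f * g) = deg f + deg g` fixes the size of the matrix.
-/

open Matrix

theorem sylvester_eq_transpose_polynomial_sylvester {R : Type*} [CommRing R] (f g : R[X]) :
    _root_.sylvester f g = (Polynomial.sylvester g f g.natDegree f.natDegree)ᵀ := by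
  have shifted_coeff (p : R[X]) (i j : ℕ) : (if i ≤ j then p.coeff (j - i) else 0) =
      if i ≤ j ∧ j ≤ i + p.natDegree then p.coeff (j - i) else 0 := by
    split_ifs <;> first | rfl | omega | exact coeff_eq_zero_of_natDegree_lt (by omega)
  ext i j
  induction i using Fin.addCases <;>
    simpa [_root_.sylvester, Polynomial.sylvester] using shifted_coeff _ _ _

theorem resultant_eq_polynomial_resultant_swap {R : Type*} [CommRing R] (f g : R[X]) :
    _root_.resultant f g = Polynomial.resultant g f := by
  rw [_root_.resultant, sylvester_eq_transpose_polynomial_sylvester, Matrix.det_transpose]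
  rfl

theorem stmt17_general {R : Type*} [CommRing R] (f g h : R[X])
    (hdeg : (f * g).natDegree = f.natDegree + g.natDegree) :
    _root_.resultant (f * g) h = _root_.resultant f h * _root_.resultant g h := by
  simp only [resultant_eq_polynomial_resultant_swap]
  rw [Polynomial.resultant, hdeg]
  exact resultant_mul_right h f g _ le_rfl

/-- Multiplicativity of the resultant: if `deg(fg) = deg f + deg g`, then
`res(fg, h) = res(f, h) · res(g, h)`. -/
theorem stmt17 {R : Type*} [CommRing R] (f g h : R[X])
    (hf : 0 < f.degree) (hg : 0 < g.degree) (hh : 0 < h.degree)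
    (hdeg : (f * g).natDegree = f.natDegree + g.natDegree) :
    _root_.resultant (f * g) h = _root_.resultant f h * _root_.resultant g h :=
  stmt17_general f g h hdeg
end

section
/- Let R be a commutative ring in which every maximal ideal has a residue field, u ∈ R[x] a unit of R[x], and f ∈ R[x] a polynomial with unit leading coefficient and positive degree. Then res(u, f) is a unit of R, provided R has finitely many maximal ideals (e.g., R is Artinian). -/
open Polynomial

/-! Modulo the nilradical the unit `u` becomes the constant `u₀`, so the reduced Sylvester matrix
of `u` and `f` is lower triangular with diagonal entries `u₀` and `lc f`. Its determinant
`u₀ ^ deg f * (lc f) ^ deg u` is a unit, and units lift along a quotient by a nil ideal. -/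

section

variable {R S : Type*} [CommRing R] [CommRing S]

lemma sylvester_apply_self (u f : R[X]) (i : Fin (f.natDegree + u.natDegree)) :
    _root_.sylvester u f i i = if (i : ℕ) < f.natDegree then u.coeff 0 else f.leadingCoeff := by
  by_cases hi : (i : ℕ) < f.natDegree
  · simp [_root_.sylvester, hi]
  · simp [_root_.sylvester, hi, Nat.sub_sub_self (not_lt.mp hi)]

lemma isLowerTriangular_map_sylvester (φ : R →+* S) (u f : R[X])
    (hu : ∀ k ≠ 0, φ (u.coeff k) = 0) : ((_root_.sylvester u f).map φ).IsLowerTriangular := by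
  intro i j (hij : (i : ℕ) < j)
  simp only [Matrix.map_apply, _root_.sylvester]
  split_ifs
  · exact hu _ (Nat.sub_ne_zero_of_lt hij)
  · exact map_zero φ
  · rw [coeff_eq_zero_of_natDegree_lt (by omega), map_zero]
  · exact map_zero φ

lemma map_resultant_of_map_coeff_eq_zero (φ : R →+* S) (u f : R[X])
    (hu : ∀ k ≠ 0, φ (u.coeff k) = 0) :
    φ (_root_.resultant u f) = φ (u.coeff 0) ^ f.natDegree * φ f.leadingCoeff ^ u.natDegree := by
  rw [_root_.resultant, RingHom.map_det, RingHom.mapMatrix_apply,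
    Matrix.det_of_isLowerTriangular _ (isLowerTriangular_map_sylvester φ u f hu), Fin.prod_univ_add]
  simp [sylvester_apply_self]

lemma isUnit_of_isUnit_mk_nilradical {x : R}
    (hx : IsUnit (Ideal.Quotient.mk (nilradical R) x)) : IsUnit x :=
  have := isLocalHom_of_le_jacobson_bot (nilradical R) Ideal.radical_le_jacobson
  hx.of_map

end

theorem stmt18_general {R : Type*} [CommRing R] (u f : R[X])
    (hu : IsUnit u) (hlc : IsUnit f.leadingCoeff) :
    IsUnit (_root_.resultant u f) := by
  obtain ⟨hu₀, hu_nil⟩ := isUnit_iff_coeff_isUnit_isNilpotent.mp hu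
  have hφu : ∀ k ≠ 0, Ideal.Quotient.mk (nilradical R) (u.coeff k) = 0 := fun k hk =>
    Ideal.Quotient.eq_zero_iff_mem.mpr (mem_nilradical.mpr (hu_nil k hk))
  apply isUnit_of_isUnit_mk_nilradical
  rw [map_resultant_of_map_coeff_eq_zero _ u f hφu]
  exact ((hu₀.map _).pow _).mul ((hlc.map _).pow _)

/-- Over an Artinian commutative ring, the resultant of a unit `u` of `R[x]`
and a polynomial `f` of positive degree with unit leading coefficient is a
unit of `R`. -/
theorem stmt18 {R : Type*} [CommRing R] [IsArtinianRing R] (u f : R[X])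
    (hu : IsUnit u) (hf : 0 < f.degree) (hlc : IsUnit f.leadingCoeff) :
    IsUnit (_root_.resultant u f) :=
  stmt18_general u f hu hlc
end
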